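/- arXiv:2402.19409 — 5 statements merged into one kernel-verified Lean document; each statement's English description precedes it below -/
import Mathlib

section
/- For every r ≥ 1, the product (1/(2^r-1)^r) · ∏_{k=1}^{r} (2^r - 2^{k-1}) is strictly greater than (1/2) · ∏_{k=1}^{∞} (1 - 2^{-k}). -/
open Real Finset

private noncomputable def ff : ℕ → ℝ := fun n => 1 - (2 : ℝ)⁻¹ ^ (n + 1)

private lemma ff_pos (n : ℕ) : 0 < ff n := by
  have h1 : (2 : ℝ)⁻¹ ^ (n + 1) ≤ (2 : ℝ)⁻¹ ^ 1 := by
    apply pow_le_pow_of_le_one (by norm_num) (by norm_num)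
    omega
  simp only [ff]
  nlinarith

private lemma ff_le_one (n : ℕ) : ff n ≤ 1 := by
  have : (0 : ℝ) < (2 : ℝ)⁻¹ ^ (n + 1) := by positivity
  simp only [ff]; linarith

private lemma log_ff_bound (n : ℕ) : -Real.log (ff n) ≤ (2 : ℝ)⁻¹ ^ n := by
  set x : ℝ := (2 : ℝ)⁻¹ ^ (n + 1) with hx
  have hx0 : 0 < x := by positivity
  have hxhalf : x ≤ 1 / 2 :=
    calc x = (2 : ℝ)⁻¹ ^ (n + 1) := hx
    _ ≤ (2 : ℝ)⁻¹ ^ 1 := pow_le_pow_of_le_one (by norm_num) (by norm_num) (by omega)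
    _ = 1 / 2 := by norm_num
  have key : Real.exp (-(2 * x)) ≤ 1 - x := by
    have h1 : 1 + 2 * x ≤ Real.exp (2 * x) := by linarith [Real.add_one_le_exp (2 * x)]
    have h2 : Real.exp (-(2 * x)) = (Real.exp (2 * x))⁻¹ := by
      rw [Real.exp_neg]
    rw [h2]
    rw [inv_le_iff_one_le_mul₀ (Real.exp_pos _)]
    nlinarith [Real.exp_pos (2 * x)]
  have hlog : -(2 * x) ≤ Real.log (ff n) := by
    have := Real.log_le_log (Real.exp_pos _) key
    rwa [Real.log_exp] at this
  have h2x : 2 * x = (2 : ℝ)⁻¹ ^ n := by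
    rw [hx, pow_succ]; ring
  linarith [hlog, h2x ▸ hlog]

private lemma summable_log_ff : Summable fun n => Real.log (ff n) := by
  rw [← summable_neg_iff]
  apply Summable.of_nonneg_of_le (fun n => _) (fun n => log_ff_bound n)
  · exact (summable_geometric_of_lt_one (by norm_num) (by norm_num))
  · intro n
    simp only [neg_nonneg]
    exact Real.log_nonpos (ff_pos n).le (ff_le_one n)

private lemma hasProd_ff : HasProd ff (Real.exp (∑' n, Real.log (ff n))) := by
  have heq : (Real.exp ∘ fun n => Real.log (ff n)) = ff :=
    funext fun n => Real.exp_log (ff_pos n)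
  have := summable_log_ff.hasSum.rexp
  rwa [heq] at this

private lemma tprod_ff_pos : 0 < ∏' n, ff n := by
  rw [hasProd_ff.tprod_eq]; exact Real.exp_pos _

private lemma tprod_ff_le (r : ℕ) : ∏' n, ff n ≤ ∏ i ∈ range r, ff i := by
  have hm := hasProd_ff.multipliable
  refine le_of_tendsto hm.hasProd.tendsto_prod_nat ?_
  filter_upwards [Filter.eventually_ge_atTop r] with n hn
  have h1 : ∏ i ∈ range n, ff i = (∏ i ∈ range r, ff i) * ∏ i ∈ range (n - r), ff (r + i) := by
    have hn' : r + (n - r) = n := by omega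
    rw [← hn', Finset.prod_range_add]
    simp
  rw [h1]
  exact mul_le_of_le_one_right (Finset.prod_nonneg fun i _ => (ff_pos i).le)
    (Finset.prod_le_one (fun i _ => (ff_pos _).le) (fun i _ => ff_le_one _))

private lemma partial_pos (r : ℕ) : 0 < ∏ i ∈ range r, ff i :=
  Finset.prod_pos fun i _ => ff_pos i

/-- For every r ≥ 1,
(1/(2^r-1)^r) · ∏_{k=1}^{r} (2^r - 2^{k-1}) > (1/2) · ∏_{k=1}^∞ (1 - 2^{-k}). -/
theorem stmt6 (r : ℕ) (hr : 1 ≤ r) :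
    (1 / ((2 ^ r - 1 : ℝ) ^ r)) * ∏ k ∈ Finset.Icc 1 r, ((2 : ℝ) ^ r - 2 ^ (k - 1)) >
      (1 / 2) * ∏' k : ℕ, (1 - (2 : ℝ)⁻¹ ^ (k + 1)) := by
  have hA : (1 : ℝ) < 2 ^ r := by
    have : (2:ℝ) ^ 1 ≤ 2 ^ r := pow_le_pow_right₀ (by norm_num) hr
    nlinarith
  have hA0 : (0 : ℝ) < 2 ^ r - 1 := by linarith
  -- Step 1: LHS = ∏ (2^r - 2^(k-1))/(2^r - 1)
  have hcard : (Finset.Icc 1 r).card = r := by simp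
  have hLHS : (1 / ((2 ^ r - 1 : ℝ) ^ r)) * ∏ k ∈ Finset.Icc 1 r, ((2 : ℝ) ^ r - 2 ^ (k - 1))
      = ∏ k ∈ Finset.Icc 1 r, ((2 : ℝ) ^ r - 2 ^ (k - 1)) / (2 ^ r - 1) := by
    rw [Finset.prod_div_distrib, Finset.prod_const, hcard]
    field_simp
  -- Step 2: termwise lower bound
  have hterm : ∀ k ∈ Finset.Icc 1 r,
      ff (r - k) ≤ ((2 : ℝ) ^ r - 2 ^ (k - 1)) / (2 ^ r - 1) := by
    intro k hk
    simp only [Finset.mem_Icc] at hk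
    obtain ⟨hk1, hkr⟩ := hk
    have hexp : r - k + 1 + (k - 1) = r := by omega
    have hnum : (2 : ℝ) ^ r - 2 ^ (k - 1) = 2 ^ (k - 1) * (2 ^ (r - k + 1) - 1) := by
      rw [mul_sub, mul_one, ← pow_add]
      congr 2
      omega
    have hnum0 : (0 : ℝ) ≤ 2 ^ r - 2 ^ (k - 1) := by
      rw [hnum]
      nlinarith [one_le_pow₀ (by norm_num : (1:ℝ) ≤ 2) (n := r - k + 1),
        pow_pos (by norm_num : (0:ℝ) < 2) (k - 1)]
    have key : ff (r - k) = ((2 : ℝ) ^ r - 2 ^ (k - 1)) / 2 ^ r := by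
      simp only [ff]
      rw [eq_div_iff (by positivity : ((2:ℝ)^r) ≠ 0)]
      have h2 : (2 : ℝ)⁻¹ ^ (r - k + 1) * 2 ^ r = 2 ^ (k - 1) := by
        rw [inv_pow, inv_mul_eq_div, div_eq_iff (by positivity : ((2:ℝ)^(r-k+1)) ≠ 0),
          ← pow_add]
        congr 1
        omega
      rw [sub_mul, one_mul, h2]
    rw [key]
    apply div_le_div_of_nonneg_left hnum0 hA0
    · linarith
  -- Step 3: reindexing
  have hre : ∏ k ∈ Finset.Icc 1 r, ff (r - k) = ∏ i ∈ range r, ff i := by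
    apply Finset.prod_nbij' (fun k => r - k) (fun i => r - i)
    · intro a ha; simp only [Finset.mem_Icc] at ha; simp only [Finset.mem_range]; omega
    · intro a ha; simp only [Finset.mem_range] at ha; simp only [Finset.mem_Icc]; omega
    · intro a ha; simp only [Finset.mem_Icc] at ha; omega
    · intro a ha; simp only [Finset.mem_range] at ha; omega
    · intro a ha; rfl
  have hprodle : ∏ i ∈ range r, ff i ≤
      ∏ k ∈ Finset.Icc 1 r, ((2 : ℝ) ^ r - 2 ^ (k - 1)) / (2 ^ r - 1) := by
    rw [← hre]
    apply Finset.prod_le_prod (fun k _ => (ff_pos _).le) hterm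
  -- Step 4: combine
  have hP : (∏' k : ℕ, (1 - (2 : ℝ)⁻¹ ^ (k + 1))) = ∏' n, ff n := rfl
  rw [hLHS, hP, gt_iff_lt]
  calc (1/2 : ℝ) * ∏' n, ff n
      ≤ (1/2) * ∏ i ∈ range r, ff i := by
        apply mul_le_mul_of_nonneg_left (tprod_ff_le r) (by norm_num)
    _ < ∏ i ∈ range r, ff i := by
        have := partial_pos r; linarith
    _ ≤ _ := hprodle
end

section
/- Let r ≤ n, let v₀ ∈ 𝔽₂^r be nonzero, and let v₁, …, v_n ∈ 𝔽₂^r. Suppose I ⊆ [n] with |I| = r−2 and 1,2,3 ∉ I (after relabeling), and suppose that for all 1 ≤ i < j ≤ 3 the multiset {v_i, v_j} ∪ {v_m : m ∈ I} is a basis of 𝔽₂^r, and for all 1 ≤ i ≤ 3 the multiset {v₀, v_i} ∪ {v_m : m ∈ I} is a basis of 𝔽₂^r. Then a contradiction follows (no such configuration exists). -/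
/-!
Let `π` be the quotient map by `S = span {v m | m ∈ I}`. The hypotheses say that `π v_a, π v_b`
form a basis of the quotient, a 2-dimensional `𝔽₂`-space, and that any two of `π v₀, π v_a,
π v_b, π v_c` are linearly independent. But over `𝔽₂` a vector independent of each of the two
basis vectors `x, y` can only be `x + y`, so `π v₀ = π v_a + π v_b = π v_c`, contradicting the
independence of `π v₀, π v_c`.
-/

open Submodule

theorem eq_add_of_span_pair_eq_top {M : Type*} [AddCommGroup M] [Module (ZMod 2) M] {x y z : M}
    (hspan : span (ZMod 2) {x, y} = ⊤) (hxz : LinearIndependent (ZMod 2) ![x, z])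
    (hyz : LinearIndependent (ZMod 2) ![y, z]) : z = x + y := by
  obtain ⟨α, β, rfl⟩ := mem_span_pair.1 (hspan ▸ mem_top : z ∈ span (ZMod 2) {x, y})
  have zero_or_one : ∀ c : ZMod 2, c = 0 ∨ c = 1 := by decide
  rcases zero_or_one α with rfl | rfl <;> rcases zero_or_one β with rfl | rfl <;>
    simp only [zero_smul, one_smul, add_zero, zero_add] at hxz hyz ⊢
  · exact (hxz.ne_zero 1 rfl).elim
  · exact (hyz.injective.ne zero_ne_one rfl).elim
  · exact (hxz.injective.ne zero_ne_one rfl).elim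

section

variable {R M ι : Type*} [Ring R] [AddCommGroup M] [Module R M]

theorem LinearIndepOn.linearIndependent_mkQ_pair {f : ι → M} {s : Set ι} {i j : ι}
    (h : LinearIndepOn R f (insert i (insert j s))) (hi : i ∉ s) (hj : j ∉ s) (hij : i ≠ j) :
    LinearIndependent R ![(span R (f '' s)).mkQ (f i), (span R (f '' s)).mkQ (f j)] := by
  have hdisj : Disjoint s {i, j} := by simp [hi, hj]
  rw [show insert i (insert j s) = s ∪ {i, j} by ext; simp,
    linearIndepOn_union_iff_quotient hdisj, LinearIndepOn.pair_iff _ hij] at h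
  exact LinearIndependent.pair_iff.2 h.2

theorem span_mkQ_pair_eq_top {f : ι → M} {s : Set ι} {i j : ι}
    (h : span R (f '' insert i (insert j s)) = ⊤) :
    span R {(span R (f '' s)).mkQ (f i), (span R (f '' s)).mkQ (f j)} = ⊤ := by
  set P := span R (f '' s)
  have hle : span R (f '' insert i (insert j s)) ≤
      (span R {P.mkQ (f i), P.mkQ (f j)}).comap P.mkQ := by
    rw [span_le]
    rintro _ ⟨k, hk | hk | hk, rfl⟩
    · exact subset_span (by simp [hk])
    · exact subset_span (by simp [hk])
    · simp [(Quotient.mk_eq_zero P).2 (subset_span ⟨k, hk, rfl⟩)]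
  refine eq_top_iff'.2 fun q => ?_
  obtain ⟨m, rfl⟩ := P.mkQ_surjective q
  exact hle (h ▸ mem_top)

variable [DecidableEq ι]

theorem linearIndependent_mkQ_pair_of_finset {f : ι → M} {I : Finset ι} {i j : ι}
    (h : LinearIndependent R (fun m : ↥(insert i (insert j I)) => f m)) (hi : i ∉ I) (hj : j ∉ I)
    (hij : i ≠ j) :
    LinearIndependent R ![(span R (f '' I)).mkQ (f i), (span R (f '' I)).mkQ (f j)] := by
  have h' : LinearIndepOn R f ↑(insert i (insert j I)) := h
  rw [Finset.coe_insert, Finset.coe_insert] at h'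
  exact h'.linearIndependent_mkQ_pair hi hj hij

theorem linearIndependent_mkQ_pair_of_option {f : ι → M} {I : Finset ι} {i : ι} {x : M}
    (h : LinearIndependent R (fun m : Option ↥(insert i I) => m.elim x (fun j => f j)))
    (hi : i ∉ I) :
    LinearIndependent R ![(span R (f '' I)).mkQ x, (span R (f '' I)).mkQ (f i)] := by
  have hI : (fun m : Option ↥(insert i I) => m.elim x (fun j => f j)) ''
      (Option.some '' {m | ↑m ∈ I}) = f '' I := by
    ext; simp; aesop
  have := (h.linearIndepOn _).linearIndependent_mkQ_pair (s := Option.some '' {m | ↑m ∈ I})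
    (i := none) (j := some ⟨i, Finset.mem_insert_self i I⟩) (by simp) (by simpa using hi)
    (by simp)
  rwa [hI] at this

theorem span_mkQ_pair_eq_top_of_finset {f : ι → M} {I : Finset ι} {i j : ι}
    (h : span R (Set.range (fun m : ↥(insert i (insert j I)) => f m)) = ⊤) :
    span R {(span R (f '' I)).mkQ (f i), (span R (f '' I)).mkQ (f j)} = ⊤ := by
  have h' : span R (f '' ↑(insert i (insert j I))) = ⊤ := by rwa [Set.image_eq_range]
  rw [Finset.coe_insert, Finset.coe_insert] at h'
  exact span_mkQ_pair_eq_top h'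

end

theorem stmt10_general (n r : ℕ) (v₀ : Fin r → ZMod 2)
    (v : Fin n → (Fin r → ZMod 2)) (I : Finset (Fin n))
    (a b c : Fin n) (hab : a ≠ b) (hac : a ≠ c) (hbc : b ≠ c)
    (haI : a ∉ I) (hbI : b ∉ I) (hcI : c ∉ I)
    (hpair : ∀ i j : Fin n, i ∈ ({a, b, c} : Set (Fin n)) → j ∈ ({a, b, c} : Set (Fin n)) →
      i ≠ j →
      LinearIndependent (ZMod 2) (fun m : ↥(insert i (insert j I) : Finset (Fin n)) => v m) ∧
      Submodule.span (ZMod 2)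
        (Set.range (fun m : ↥(insert i (insert j I) : Finset (Fin n)) => v m)) = ⊤)
    (hzero : ∀ i : Fin n, i ∈ ({a, b, c} : Set (Fin n)) →
      LinearIndependent (ZMod 2)
        (fun m : Option ↥(insert i I : Finset (Fin n)) => m.elim v₀ (fun j => v j)) ∧
      Submodule.span (ZMod 2)
        (Set.range (fun m : Option ↥(insert i I : Finset (Fin n)) =>
          m.elim v₀ (fun j => v j))) = ⊤) :
    False := by
  have hpairQ := fun i j hi hj hiI hjI hij ↦
    linearIndependent_mkQ_pair_of_finset (hpair i j hi hj hij).1 hiI hjI hij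
  have hzeroQ := fun i hi hiI ↦ linearIndependent_mkQ_pair_of_option (hzero i hi).1 hiI
  have hspan := span_mkQ_pair_eq_top_of_finset (hpair a b (by simp) (by simp) hab).2
  have hc := eq_add_of_span_pair_eq_top hspan (hpairQ a c (by simp) (by simp) haI hcI hac)
    (hpairQ b c (by simp) (by simp) hbI hcI hbc)
  have h₀ := eq_add_of_span_pair_eq_top hspan
    (LinearIndependent.pair_symm_iff.1 (hzeroQ a (by simp) haI))
    (LinearIndependent.pair_symm_iff.1 (hzeroQ b (by simp) hbI))
  exact (hzeroQ c (by simp) hcI).injective.ne zero_ne_one (h₀.trans hc.symm)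

/-- Let r ≤ n, v₀ ∈ 𝔽₂^r nonzero, v₁,…,v_n ∈ 𝔽₂^r, and I ⊆ [n] with |I| = r-2 not
containing the three (relabeled) indices a, b, c. If for all pairs i ≠ j among
{a,b,c} the family {v_i, v_j} ∪ {v_m : m ∈ I} is a basis of 𝔽₂^r, and for each
i ∈ {a,b,c} the family {v₀, v_i} ∪ {v_m : m ∈ I} is a basis of 𝔽₂^r, then a
contradiction follows. -/
theorem stmt10 (n r : ℕ) (hrn : r ≤ n) (v₀ : Fin r → ZMod 2) (hv₀ : v₀ ≠ 0)
    (v : Fin n → (Fin r → ZMod 2)) (I : Finset (Fin n)) (hI : I.card = r - 2)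
    (a b c : Fin n) (hab : a ≠ b) (hac : a ≠ c) (hbc : b ≠ c)
    (haI : a ∉ I) (hbI : b ∉ I) (hcI : c ∉ I)
    (hpair : ∀ i j : Fin n, i ∈ ({a, b, c} : Set (Fin n)) → j ∈ ({a, b, c} : Set (Fin n)) →
      i ≠ j →
      LinearIndependent (ZMod 2) (fun m : ↥(insert i (insert j I) : Finset (Fin n)) => v m) ∧
      Submodule.span (ZMod 2)
        (Set.range (fun m : ↥(insert i (insert j I) : Finset (Fin n)) => v m)) = ⊤)
    (hzero : ∀ i : Fin n, i ∈ ({a, b, c} : Set (Fin n)) →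
      LinearIndependent (ZMod 2)
        (fun m : Option ↥(insert i I : Finset (Fin n)) => m.elim v₀ (fun j => v j)) ∧
      Submodule.span (ZMod 2)
        (Set.range (fun m : Option ↥(insert i I : Finset (Fin n)) =>
          m.elim v₀ (fun j => v j))) = ⊤) :
    False :=
  stmt10_general n r v₀ v I a b c hab hac hbc haI hbI hcI hpair hzero
end

section
/- Fix r ≤ n, a nonzero v₀ ∈ 𝔽₂^r, and vectors v₁,…,v_n ∈ 𝔽₂^r. Define B_r as the family of r-element subsets S of [n] with {v_i : i ∈ S} a basis of 𝔽₂^r, and B_{r−1} as the family of (r−1)-element subsets S with {v₀} ∪ {v_i : i ∈ S} a basis of 𝔽₂^r. Let G_r be the bipartite graph on B_{r−1} ∪ B_r with an edge between x ∈ B_{r−1} and y ∈ B_r whenever x ⊂ y. Then G_r contains no cycle of length 6. -/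
open Submodule

private lemma span_small_ne_top {r : ℕ} (s : Finset (Fin r → ZMod 2)) (hs : s.card < r) :
    Submodule.span (ZMod 2) (↑s : Set (Fin r → ZMod 2)) ≠ ⊤ := by
  intro h
  have h1 : (↑s : Set (Fin r → ZMod 2)).finrank (ZMod 2) ≤ s.card :=
    finrank_span_finset_le_card s
  unfold Set.finrank at h1
  rw [h, finrank_top, Module.finrank_fin_fun] at h1
  omega

private lemma range_option_eq {n r : ℕ} (v₀ : Fin r → ZMod 2) (v : Fin n → Fin r → ZMod 2)
    (S : Finset (Fin n)) :
    (Set.range fun m : Option ↥S => m.elim v₀ (fun j => v j)) = insert v₀ (v '' ↑S) := by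
  ext x
  constructor
  · rintro ⟨(_ | j), rfl⟩
    · exact Or.inl rfl
    · exact Or.inr ⟨j, j.2, rfl⟩
  · rintro (rfl | ⟨j, hj, rfl⟩)
    · exact ⟨none, rfl⟩
    · exact ⟨some ⟨j, hj⟩, rfl⟩

private lemma key {r : ℕ} (hr : 2 ≤ r) (J : Finset (Fin r → ZMod 2)) (hJ : J.card ≤ r - 2)
    (x y z : Fin r → ZMod 2)
    (hxy : Submodule.span (ZMod 2) (insert x (insert y (↑J : Set (Fin r → ZMod 2)))) = ⊤)
    (hxz : Submodule.span (ZMod 2) (insert x (insert z (↑J : Set (Fin r → ZMod 2)))) = ⊤)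
    (hyz : Submodule.span (ZMod 2) (insert y (insert z (↑J : Set (Fin r → ZMod 2)))) = ⊤) :
    ∃ w ∈ Submodule.span (ZMod 2) (↑J : Set (Fin r → ZMod 2)), z = x + y + w := by
  have hne : ∀ u : Fin r → ZMod 2,
      Submodule.span (ZMod 2) (insert u (↑J : Set (Fin r → ZMod 2))) ≠ ⊤ := by
    intro u
    rw [← Finset.coe_insert]
    apply span_small_ne_top
    have := Finset.card_insert_le u J
    omega
  have hz : z ∈ Submodule.span (ZMod 2) (insert x (insert y (↑J : Set (Fin r → ZMod 2)))) := by
    rw [hxy]; trivial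
  rcases Submodule.mem_span_insert.mp hz with ⟨α, z1, hz1, hze⟩
  rcases Submodule.mem_span_insert.mp hz1 with ⟨β, w, hw, hwe⟩
  subst hwe; subst hze
  have h2 : ∀ γ : ZMod 2, γ = 0 ∨ γ = 1 := by decide
  have hα : α = 1 := by
    rcases h2 α with h | h
    · exfalso
      subst h
      apply hne y
      have hzmem : (0 : ZMod 2) • x + (β • y + w) ∈
          Submodule.span (ZMod 2) (insert y (↑J : Set (Fin r → ZMod 2))) := by
        rw [zero_smul, zero_add]
        exact Submodule.add_mem _
          (Submodule.smul_mem _ _ (Submodule.subset_span (Set.mem_insert _ _)))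
          (Submodule.span_mono (Set.subset_insert _ _) hw)
      rw [← hyz, Set.insert_comm, Submodule.span_insert_eq_span hzmem]
    · exact h
  have hβ : β = 1 := by
    rcases h2 β with h | h
    · exfalso
      subst h
      apply hne x
      have hzmem : α • x + ((0 : ZMod 2) • y + w) ∈
          Submodule.span (ZMod 2) (insert x (↑J : Set (Fin r → ZMod 2))) := by
        rw [zero_smul, zero_add]
        exact Submodule.add_mem _
          (Submodule.smul_mem _ _ (Submodule.subset_span (Set.mem_insert _ _)))
          (Submodule.span_mono (Set.subset_insert _ _) hw)
      rw [← hxz, Set.insert_comm, Submodule.span_insert_eq_span hzmem]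
    · exact h
  subst hα; subst hβ
  exact ⟨w, hw, by rw [one_smul, one_smul]; abel⟩

/-- Fix r ≤ n, a nonzero v₀ ∈ 𝔽₂^r and v₁,…,v_n ∈ 𝔽₂^r. With B_r the r-subsets S
of [n] whose vectors form a basis and B_{r-1} the (r-1)-subsets S with
{v₀} ∪ {v_i : i ∈ S} a basis, the bipartite containment graph G_r on B_{r-1} ∪ B_r
has no 6-cycle; equivalently, there is no (r-2)-set I and distinct a, b, c ∉ I with
{a}∪I, {b}∪I, {c}∪I ∈ B_{r-1} and {a,b}∪I, {b,c}∪I, {a,c}∪I ∈ B_r. -/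
theorem stmt12 (n r : ℕ) (hrn : r ≤ n) (v₀ : Fin r → ZMod 2) (hv₀ : v₀ ≠ 0)
    (v : Fin n → (Fin r → ZMod 2))
    (Br : Finset (Fin n) → Prop)
    (hBr : ∀ S, Br S ↔ S.card = r ∧
      LinearIndependent (ZMod 2) (fun m : ↥S => v m) ∧
      Submodule.span (ZMod 2) (Set.range fun m : ↥S => v m) = ⊤)
    (Br' : Finset (Fin n) → Prop)
    (hBr' : ∀ S, Br' S ↔ S.card = r - 1 ∧
      LinearIndependent (ZMod 2) (fun m : Option ↥S => m.elim v₀ (fun j => v j)) ∧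
      Submodule.span (ZMod 2)
        (Set.range fun m : Option ↥S => m.elim v₀ (fun j => v j)) = ⊤) :
    ¬ ∃ (I : Finset (Fin n)) (a b c : Fin n), I.card = r - 2 ∧
        a ≠ b ∧ a ≠ c ∧ b ≠ c ∧ a ∉ I ∧ b ∉ I ∧ c ∉ I ∧
        Br' (insert a I) ∧ Br' (insert b I) ∧ Br' (insert c I) ∧
        Br (insert a (insert b I)) ∧ Br (insert b (insert c I)) ∧
        Br (insert a (insert c I)) := by
  rintro ⟨I, a, b, c, hI, hab, hac, hbc, haI, hbI, hcI, Ha', Hb', Hc', Hab, Hbc, Hac⟩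
  -- rule out r ≤ 1
  rcases Nat.lt_or_ge r 2 with hr | hr
  · interval_cases r
    · exact hv₀ (Subsingleton.elim _ _)
    · have := (hBr' _).mp Ha'
      have hcard : (insert a I).card = 0 := this.1
      simp [Finset.card_insert_of_notMem haI] at hcard
  -- set up
  have hrange : ∀ S : Finset (Fin n), (Set.range fun m : ↥S => v m) = v '' ↑S := by
    intro S
    ext x
    constructor
    · rintro ⟨j, rfl⟩; exact ⟨j, j.2, rfl⟩
    · rintro ⟨j, hj, rfl⟩; exact ⟨⟨j, hj⟩, rfl⟩
  set J : Finset (Fin r → ZMod 2) := I.image v with hJdef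
  have hJc : (↑J : Set (Fin r → ZMod 2)) = v '' ↑I := Finset.coe_image
  have hJcard : J.card ≤ r - 2 := le_trans (Finset.card_image_le) (le_of_eq hI)
  have himg : ∀ (x y : Fin n), v '' ↑(insert x (insert y I)) =
      insert (v x) (insert (v y) (↑J : Set (Fin r → ZMod 2))) := by
    intro x y
    rw [Finset.coe_insert, Finset.coe_insert, Set.image_insert_eq, Set.image_insert_eq, hJc]
  -- spanning facts from Br
  have Sab : Submodule.span (ZMod 2) (insert (v a) (insert (v b) (↑J : Set _))) = ⊤ := by
    have := ((hBr _).mp Hab).2.2; rwa [hrange, himg] at this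
  have Sbc : Submodule.span (ZMod 2) (insert (v b) (insert (v c) (↑J : Set _))) = ⊤ := by
    have := ((hBr _).mp Hbc).2.2; rwa [hrange, himg] at this
  have Sac : Submodule.span (ZMod 2) (insert (v a) (insert (v c) (↑J : Set _))) = ⊤ := by
    have := ((hBr _).mp Hac).2.2; rwa [hrange, himg] at this
  -- spanning facts from Br'
  have himg' : ∀ x : Fin n, insert v₀ (v '' ↑(insert x I)) =
      insert (v x) (insert v₀ (↑J : Set (Fin r → ZMod 2))) := by
    intro x
    rw [Finset.coe_insert, Set.image_insert_eq, hJc, Set.insert_comm]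
  have Sa : Submodule.span (ZMod 2) (insert (v a) (insert v₀ (↑J : Set _))) = ⊤ := by
    have := ((hBr' _).mp Ha').2.2; rwa [range_option_eq, himg'] at this
  have Sb : Submodule.span (ZMod 2) (insert (v b) (insert v₀ (↑J : Set _))) = ⊤ := by
    have := ((hBr' _).mp Hb').2.2; rwa [range_option_eq, himg'] at this
  have Sc : Submodule.span (ZMod 2) (insert (v c) (insert v₀ (↑J : Set _))) = ⊤ := by
    have := ((hBr' _).mp Hc').2.2; rwa [range_option_eq, himg'] at this
  -- apply key twice
  obtain ⟨w, hw, hwc⟩ := key hr J hJcard (v a) (v b) (v c) Sab Sac Sbc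
  obtain ⟨w', hw', hw0⟩ := key hr J hJcard (v a) (v b) v₀ Sab Sa Sb
  -- v₀ = v c + (w' - w)
  have hmem : v₀ ∈ Submodule.span (ZMod 2) (insert (v c) (↑J : Set (Fin r → ZMod 2))) := by
    have h3 : v₀ = v c + (w' - w) := by rw [hw0, hwc]; abel
    rw [h3]
    exact Submodule.add_mem _ (Submodule.subset_span (Set.mem_insert _ _))
      (Submodule.span_mono (Set.subset_insert _ _) (Submodule.sub_mem _ hw' hw))
  have : Submodule.span (ZMod 2) (insert (v c) (↑J : Set (Fin r → ZMod 2))) = ⊤ := by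
    rw [← Sc, Set.insert_comm, Submodule.span_insert_eq_span hmem]
  refine span_small_ne_top (insert (v c) J) ?_ (by rwa [Finset.coe_insert])
  have := Finset.card_insert_le (v c) J
  omega
end

section
/- Let x ⊂ y with |x| = r−1, |y| = r, x,y ⊆ [n]. If v₁, …, v_n are chosen independently uniformly at random from 𝔽₂^r \ {0} and v₀ is a fixed nonzero vector, then the probability that both ({v₀} ∪ {v_i : i ∈ x}) and ({v_i : i ∈ y}) are bases of 𝔽₂^r is greater than (1/2)·∏_{k=1}^∞ (1 − 2^{−k}). -/
/-!
Write `y = insert j x`. Both families are bases iff `(v₀, v_x)` is linearly independent and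
`v_j ∉ span v_x`, while the `v_i` with `i ∉ y` are unconstrained. Choosing the vectors of `v_x`
one at a time, the `i`-th one must avoid a subspace with `2 ^ i` elements, so the probability is
exactly `∏_{i=1}^{r-1} (2^r - 2^i)/(2^r - 1) · 2^(r-1)/(2^r - 1)`. The `i`-th factor is at least
`1 - 2^(i-r)`, the last one exceeds `1/2`, and the partial products of `∏ (1 - 2^(-k))` dominate
the infinite product.
-/

open Finset Function Set Submodule

theorem Nat.card_subtype_prod_of_card_fiber {α β : Type*} [Finite α] [Finite β]
    {P : α → Prop} {Q : α → β → Prop} {c : ℕ} (hQ : ∀ a, P a → Nat.card {b // Q a b} = c) :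
    Nat.card {p : α × β // P p.1 ∧ Q p.1 p.2} = Nat.card {a // P a} * c := by
  classical
  have := Fintype.ofFinite α
  let e : {p : α × β // P p.1 ∧ Q p.1 p.2} ≃ Σ a : {a // P a}, {b // Q a b} :=
    { toFun p := ⟨⟨p.1.1, p.2.1⟩, ⟨p.1.2, p.2.2⟩⟩
      invFun s := ⟨(s.1.1, s.2.1), s.1.2, s.2.2⟩ }
  rw [Nat.card_congr e, Nat.card_sigma, Finset.sum_congr rfl fun a _ => hQ a.1 a.2,
    Finset.sum_const, smul_eq_mul, Finset.card_univ, ← Nat.card_eq_fintype_card]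

theorem Nat.card_subtype_restrict_finset {α β : Type*} [Fintype α] [DecidableEq α]
    (s : Finset α) (P : (s → β) → Prop) :
    Nat.card {v : α → β // P fun i : s => v i} =
      Nat.card {w : s → β // P w} * Nat.card β ^ (Fintype.card α - s.card) := by
  rw [Nat.card_congr (((Equiv.piEquivPiSubtypeProd (· ∈ s) fun _ => β).subtypeEquiv
      (p := fun v => P fun i : s => v i) (q := fun p => P p.1) fun _ => Iff.rfl).trans
      Equiv.prodSubtypeFstEquivSubtypeProd), Nat.card_prod, Nat.card_fun,
    Nat.card_eq_fintype_card (α := {i // i ∉ s}), Fintype.card_subtype_compl, Fintype.card_coe]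

theorem Nat.card_subtype_pi_subtype {ι β : Type*} {p : β → Prop} {P : (ι → β) → Prop}
    (hP : ∀ u, P u → ∀ i, p (u i)) :
    Nat.card {u : ι → {b // p b} // P fun i => u i} = Nat.card {u : ι → β // P u} :=
  Nat.card_congr
    { toFun u := ⟨fun i => u.1 i, u.2⟩
      invFun u := ⟨fun i => ⟨u.1 i, hP _ u.2 i⟩, u.2⟩ }

theorem linearIndependent_optionElim_iff_append {R M ι : Type*} [Semiring R] [AddCommMonoid M]
    [Module R M] {k : ℕ} (e : ι ≃ Fin k) (v₀ : M) (u : ι → M) :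
    LinearIndependent R (fun o : Option ι => o.elim v₀ u) ↔
      LinearIndependent R (Fin.append ![v₀] (u ∘ e.symm)) := by
  let σ : Option ι ≃ Fin (1 + k) :=
    (Equiv.optionCongr e).trans ((finSuccEquiv k).symm.trans (finCongr (add_comm k 1)))
  have hσ : (fun o : Option ι => o.elim v₀ u) = Fin.append ![v₀] (u ∘ e.symm) ∘ σ := by
    funext o
    cases o <;> simp [σ, Fin.append_left_eq_cons]
  rw [hσ, linearIndependent_equiv]

section FiniteField

variable {K V : Type*} [DivisionRing K] [Fintype K] [AddCommGroup V] [Module K V] [Finite V]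

local notation "q" => Fintype.card K
local notation "d" => Module.finrank K V

theorem card_compl_span_range {ι : Type*} [Fintype ι] {s : ι → V}
    (hs : LinearIndependent K s) :
    Nat.card {a : V // a ∉ span K (range s)} = q ^ d - q ^ Fintype.card ι := by
  classical
  have := Fintype.ofFinite V
  rw [Nat.card_eq_fintype_card, Fintype.card_subtype_compl,
    Module.card_eq_pow_finrank (K := K) (V := V),
    Module.card_eq_pow_finrank (K := K) (V := span K (range s)), finrank_span_eq_card hs]

theorem card_linearIndependent_append {m : ℕ} {s : Fin m → V} (hs : LinearIndependent K s) :
    ∀ k : ℕ, Nat.card {u : Fin k → V // LinearIndependent K (Fin.append s u)} =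
      ∏ i : Fin k, (q ^ d - q ^ (m + i))
  | 0 => by
    have hs' : ∀ u : Fin 0 → V, LinearIndependent K (Fin.append s u) := fun u => by
      rw [Fin.append_right_nil s u rfl]
      exact (linearIndependent_equiv (finCongr (add_zero m))).2 hs
    rw [Nat.card_congr (Equiv.subtypeUnivEquiv hs'), Nat.card_unique, Finset.univ_eq_empty,
      Finset.prod_empty]
  | k + 1 => by
    have hsnoc (u : Fin k → V) (a : V) : LinearIndependent K (Fin.append s (Fin.snoc u a)) ↔
        LinearIndependent K (Fin.append s u) ∧ a ∉ span K (range (Fin.append s u)) := by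
      rw [Fin.append_snoc, linearIndependent_finSnoc]
    rw [← Nat.card_congr (((Equiv.prodComm _ _).trans (Fin.snocEquiv fun _ => V)).subtypeEquiv
      fun p => (hsnoc p.1 p.2).symm), Nat.card_subtype_prod_of_card_fiber
      fun u hu => card_compl_span_range hu, card_linearIndependent_append hs k,
      Fin.prod_univ_castSucc, Fintype.card_fin]
    rfl

theorem card_linearIndependent_optionElim {ι : Type*} [Fintype ι] {v₀ : V} (hv₀ : v₀ ≠ 0) :
    Nat.card {u : ι → V // LinearIndependent K (fun o : Option ι => o.elim v₀ u)} =
      ∏ i : Fin (Fintype.card ι), (q ^ d - q ^ (1 + (i : ℕ))) := by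
  let e := Fintype.equivFin ι
  rw [Nat.card_congr (((e.arrowCongr (Equiv.refl V)).subtypeEquiv
      fun u => linearIndependent_optionElim_iff_append e v₀ u :
        _ ≃ {g // LinearIndependent K (Fin.append ![v₀] g)})),
    card_linearIndependent_append (LinearIndependent.of_subsingleton 0 hv₀)]

theorem card_linearIndependent_optionElim_and {ι : Type*} [Fintype ι] {v₀ : V} (hv₀ : v₀ ≠ 0) :
    Nat.card {w : Option ι → V //
        LinearIndependent K (fun o : Option ι => o.elim v₀ (fun i => w (some i))) ∧
          LinearIndependent K w} =
      (∏ i : Fin (Fintype.card ι), (q ^ d - q ^ (1 + (i : ℕ)))) * (q ^ d - q ^ Fintype.card ι) := by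
  let e : (ι → V) × V ≃ (Option ι → V) :=
    (Equiv.prodComm _ _).trans (Equiv.piOptionEquivProd (β := fun _ => V)).symm
  have hsplit (p : (ι → V) × V) :
      (LinearIndependent K (fun o : Option ι => o.elim v₀ p.1) ∧ p.2 ∉ span K (range p.1)) ↔
        (LinearIndependent K (fun o : Option ι => o.elim v₀ (fun i => e p (some i))) ∧
          LinearIndependent K (e p)) :=
    and_congr_right fun h₀ => by
      rw [linearIndependent_option]
      exact (and_iff_right (linearIndependent_option.1 h₀).1).symm
  rw [← Nat.card_congr (e.subtypeEquiv hsplit), Nat.card_subtype_prod_of_card_fiber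
      (P := fun u => LinearIndependent K fun o : Option ι => o.elim v₀ u)
      fun u hu => card_compl_span_range (s := u) (linearIndependent_option.1 hu).1,
    card_linearIndependent_optionElim hv₀]

theorem linearIndependent_and_span_eq_top_iff {ι : Type*} [Fintype ι] {b : ι → V}
    (h : Fintype.card ι = d) :
    (LinearIndependent K b ∧ span K (range b) = ⊤) ↔ LinearIndependent K b :=
  and_iff_left_of_imp fun hb => hb.span_eq_top_of_card_eq_finrank' h

theorem natCard_subtype_ne_zero : Nat.card {a : V // a ≠ 0} = q ^ d - 1 := by
  classical
  have := Fintype.ofFinite V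
  rw [Nat.card_eq_fintype_card, Fintype.card_subtype_compl, Fintype.card_subtype_eq,
    Module.card_eq_pow_finrank (K := K)]

theorem card_linearIndependent_optionElim_and_insert {ι : Type*} [DecidableEq ι] {x : Finset ι}
    {j : ι} (hj : j ∉ x) {v₀ : V} (hv₀ : v₀ ≠ 0) :
    Nat.card {w : ↥(insert j x) → {a : V // a ≠ 0} //
        LinearIndependent K (fun m : Option x =>
          m.elim v₀ fun i => (w ⟨i, Finset.mem_insert_of_mem i.2⟩ : V)) ∧
        LinearIndependent K (fun m => (w m : V))} =
      (∏ i : Fin x.card, (q ^ d - q ^ (1 + (i : ℕ)))) * (q ^ d - q ^ x.card) := by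
  let e := Finset.subtypeInsertEquivOption hj
  -- `@` because the named argument `(q := _)` would be read as the local notation `q`
  refine (Nat.card_congr (@Equiv.subtypeEquiv _ _ _ (fun w : Option x → {a : V // a ≠ 0} =>
      LinearIndependent K (fun m : Option x => m.elim v₀ fun i => (w (some i) : V)) ∧
        LinearIndependent K (fun m => (w m : V)))
      (e.arrowCongr (Equiv.refl _))
      fun _ => and_congr Iff.rfl (linearIndependent_equiv e.symm).symm)).trans ?_
  rw [Nat.card_subtype_pi_subtype (P := fun w : Option x → V =>
      LinearIndependent K (fun m : Option x => m.elim v₀ fun i => w (some i)) ∧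
        LinearIndependent K w) fun _ hw => hw.2.ne_zero,
    card_linearIndependent_optionElim_and hv₀, Fintype.card_coe]

theorem card_bases_optionElim_and_insert {ι : Type*} [Fintype ι] [DecidableEq ι] {x : Finset ι}
    {j : ι} (hj : j ∉ x) (hd : x.card + 1 = d) {v₀ : V} (hv₀ : v₀ ≠ 0) :
    Nat.card {v : ι → {a : V // a ≠ 0} //
        (LinearIndependent K (fun m : Option x => m.elim v₀ fun i => (v i : V)) ∧
          span K (range fun m : Option x => m.elim v₀ fun i => (v i : V)) = ⊤) ∧
        (LinearIndependent K (fun m : ↥(insert j x) => (v m : V)) ∧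
          span K (range fun m : ↥(insert j x) => (v m : V)) = ⊤)} =
      (∏ i : Fin x.card, (q ^ d - q ^ (1 + (i : ℕ)))) * (q ^ d - q ^ x.card) *
        (q ^ d - 1) ^ (Fintype.card ι - d) := by
  have hcard : (insert j x).card = d := by rw [Finset.card_insert_of_notMem hj, hd]
  rw [Nat.card_congr (Equiv.subtypeEquivRight fun v => and_congr
      (linearIndependent_and_span_eq_top_iff (by rw [Fintype.card_option, Fintype.card_coe, hd]))
      (linearIndependent_and_span_eq_top_iff (by rw [Fintype.card_coe, hcard])))]
  refine (Nat.card_subtype_restrict_finset (insert j x)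
    fun w : ↥(insert j x) → {a : V // a ≠ 0} =>
      LinearIndependent K (fun m : Option x =>
        m.elim v₀ fun i => (w ⟨i, Finset.mem_insert_of_mem i.2⟩ : V)) ∧
      LinearIndependent K (fun m => (w m : V))).trans ?_
  rw [card_linearIndependent_optionElim_and_insert hj hv₀, natCard_subtype_ne_zero (K := K), hcard]

end FiniteField

theorem tprod_le_prod_of_le_one {ι : Type*} {f : ι → ℝ} (hf : Multipliable f) (h0 : ∀ i, 0 ≤ f i)
    (h1 : ∀ i, f i ≤ 1) (s : Finset ι) : ∏' i, f i ≤ ∏ i ∈ s, f i :=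
  (prod_anti_set_of_le_one h0 h1).le_of_tendsto hf.hasProd s

theorem multipliable_one_sub_inv_two_pow : Multipliable fun k : ℕ => 1 - (2 : ℝ)⁻¹ ^ (k + 1) := by
  have h := ((summable_geometric_of_lt_one (by norm_num) (by norm_num : (2 : ℝ)⁻¹ < 1)).mul_left
    2⁻¹).neg
  simpa [sub_eq_add_neg, pow_succ, mul_comm] using Real.multipliable_one_add_of_summable h

theorem prod_range_one_sub_inv_two_pow_le (r : ℕ) :
    ∏ k ∈ range (r - 1), (1 - (2 : ℝ)⁻¹ ^ (k + 1)) ≤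
      ∏ i : Fin (r - 1), ((2 : ℝ) ^ r - 2 ^ (1 + (i : ℕ))) / (2 ^ r - 1) := by
  rw [Fin.prod_univ_eq_prod_range (fun i => ((2 : ℝ) ^ r - 2 ^ (1 + i)) / (2 ^ r - 1)),
    ← prod_range_reflect]
  refine prod_le_prod (fun k _ => by
    have : (2 : ℝ)⁻¹ ^ (r - 1 - 1 - k + 1) ≤ 1 := pow_le_one₀ (by norm_num) (by norm_num)
    linarith) fun i hi => ?_
  rw [Finset.mem_range] at hi
  have hsplit : (2 : ℝ) ^ r = 2 ^ (r - 1 - i) * 2 ^ (1 + i) := by rw [← pow_add]; congr 1; omega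
  have ha : (2 : ℝ) ≤ 2 ^ (r - 1 - i) := le_self_pow₀ (by norm_num) (by omega)
  have ht : (1 : ℝ) ≤ 2 ^ (1 + i) := one_le_pow₀ (by norm_num)
  rw [show r - 1 - 1 - i + 1 = r - 1 - i by omega, inv_pow, hsplit,
    le_div_iff₀ (by nlinarith)]
  field_simp
  nlinarith

theorem half_mul_tprod_lt_card_div {n r : ℕ} (hr : 1 ≤ r) (hrn : r ≤ n) :
    1 / 2 * ∏' k : ℕ, (1 - (2 : ℝ)⁻¹ ^ (k + 1)) <
      (((∏ i : Fin (r - 1), (2 ^ r - 2 ^ (1 + (i : ℕ)))) * (2 ^ r - 2 ^ (r - 1)) *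
        (2 ^ r - 1) ^ (n - r) : ℕ) : ℝ) / (2 ^ r - 1 : ℝ) ^ n := by
  have hN : (1 : ℝ) < 2 ^ r := one_lt_pow₀ (by norm_num) (by omega)
  have hlast : (2 : ℝ) ^ r = 2 * 2 ^ (r - 1) := by rw [← pow_succ']; congr 1; omega
  have hcast : (((∏ i : Fin (r - 1), (2 ^ r - 2 ^ (1 + (i : ℕ)))) * (2 ^ r - 2 ^ (r - 1)) *
        (2 ^ r - 1) ^ (n - r) : ℕ) : ℝ) / (2 ^ r - 1 : ℝ) ^ n =
      (∏ i : Fin (r - 1), ((2 : ℝ) ^ r - 2 ^ (1 + (i : ℕ))) / (2 ^ r - 1)) *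
        (2 ^ (r - 1) / (2 ^ r - 1)) := by
    rw [Nat.cast_mul, Nat.cast_mul, Nat.cast_prod, Nat.cast_pow,
      Nat.cast_sub (Nat.pow_le_pow_right two_pos (Nat.sub_le r 1)),
      Nat.cast_sub Nat.one_le_two_pow,
      prod_congr rfl fun i _ => Nat.cast_sub (Nat.pow_le_pow_right two_pos (by omega)),
      prod_div_distrib, prod_const, card_univ, Fintype.card_fin]
    push_cast
    have hq : (2 : ℝ) ^ r - 1 ≠ 0 := by linarith
    rw [show (2 : ℝ) ^ r - 2 ^ (r - 1) = 2 ^ (r - 1) by linarith,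
      show ((2 : ℝ) ^ r - 1) ^ n = (2 ^ r - 1) ^ (r - 1) * (2 ^ r - 1) * (2 ^ r - 1) ^ (n - r) by
        rw [← pow_succ, ← pow_add]; congr 1; omega]
    field_simp
  have hQ : 0 < ∏ k ∈ range (r - 1), (1 - (2 : ℝ)⁻¹ ^ (k + 1)) :=
    prod_pos fun k _ => sub_pos.2 (pow_lt_one₀ (by norm_num) (by norm_num) (by omega))
  have hB : 1 / 2 < (2 : ℝ) ^ (r - 1) / (2 ^ r - 1) := by
    rw [div_lt_div_iff₀ two_pos (by linarith)]
    linarith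
  rw [hcast]
  calc 1 / 2 * ∏' k : ℕ, (1 - (2 : ℝ)⁻¹ ^ (k + 1))
      ≤ 1 / 2 * ∏ k ∈ range (r - 1), (1 - (2 : ℝ)⁻¹ ^ (k + 1)) := by
        gcongr
        exact tprod_le_prod_of_le_one multipliable_one_sub_inv_two_pow
          (fun k => sub_nonneg.2 (pow_le_one₀ (by norm_num) (by norm_num)))
          (fun k => sub_le_self _ (by positivity)) _
    _ < 2 ^ (r - 1) / (2 ^ r - 1) * ∏ k ∈ range (r - 1), (1 - (2 : ℝ)⁻¹ ^ (k + 1)) := by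
        gcongr
    _ ≤ _ := by
        rw [mul_comm]
        gcongr
        exact prod_range_one_sub_inv_two_pow_le r

open Classical in
/-- Let x ⊂ y ⊆ [n] with |x| = r-1, |y| = r. If v₁,…,v_n are i.i.d. uniform on
𝔽₂^r \ {0} and v₀ is a fixed nonzero vector, the probability that both
{v₀} ∪ {v_i : i ∈ x} and {v_i : i ∈ y} are bases of 𝔽₂^r is greater than
(1/2)·∏_{k=1}^∞ (1 - 2^{-k}). -/
theorem stmt16 (n r : ℕ) (x y : Finset (Fin n)) (hxy : x ⊂ y)
    (hx : x.card = r - 1) (hy : y.card = r)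
    (v₀ : Fin r → ZMod 2) (hv₀ : v₀ ≠ 0) :
    (Nat.card {v : Fin n → {w : Fin r → ZMod 2 // w ≠ 0} //
        (LinearIndependent (ZMod 2)
            (fun m : Option ↥x => m.elim v₀ (fun j => (v j : Fin r → ZMod 2))) ∧
          Submodule.span (ZMod 2)
            (Set.range fun m : Option ↥x =>
              m.elim v₀ (fun j => (v j : Fin r → ZMod 2))) = ⊤) ∧
        (LinearIndependent (ZMod 2) (fun m : ↥y => (v m : Fin r → ZMod 2)) ∧
          Submodule.span (ZMod 2)
            (Set.range fun m : ↥y => (v m : Fin r → ZMod 2)) = ⊤)} : ℝ) /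
      ((2 ^ r - 1 : ℝ) ^ n) >
    (1 / 2) * ∏' k : ℕ, (1 - (2 : ℝ)⁻¹ ^ (k + 1)) := by
  have hlt := Finset.card_lt_card hxy
  obtain ⟨j, hj, rfl⟩ := Finset.exists_eq_insert_iff.2 ⟨hxy.subset, by omega⟩
  have hrn : r ≤ n := hy ▸ (Finset.card_le_univ _).trans_eq (Fintype.card_fin n)
  rw [gt_iff_lt, card_bases_optionElim_and_insert (K := ZMod 2) hj
      (by rw [Module.finrank_fin_fun]; omega) hv₀,
    ZMod.card, Module.finrank_fin_fun, Fintype.card_fin, hx]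
  exact half_mul_tprod_lt_card_div (by omega) hrn
end

section
/- In any induced subgraph of a layer L_r(n) of the hypercube, every copy of C₆⁻ (a 6-cycle minus one edge, i.e., a path with 5 edges whose endpoints differ in one coordinate) extends to a copy of C₆; hence an induced subgraph of L_r(n) with no 6-cycle contains no C₆⁻. -/
/-! Since the subgraph is induced, the layer edge joining the two ends of a copy of C₆⁻ is an
edge of the subgraph, and adding it to the 5-edge path closes a 6-cycle. -/

/-- The layer graph L_r(n): the bipartite graph on subsets of [n] with edges given
by inclusion between sets of size r-1 and sets of size r. -/
def layerGraph (n r : ℕ) : SimpleGraph (Finset (Fin n)) where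
  Adj x y := (x ⊂ y ∧ y.card = r ∧ x.card + 1 = r) ∨ (y ⊂ x ∧ x.card = r ∧ y.card + 1 = r)
  symm := ⟨by intro x y h; tauto⟩
  loopless := ⟨by intro x h; simp only [ssubset_irrefl, false_and, or_self] at h⟩

namespace SimpleGraph

variable {V : Type*} {G : SimpleGraph V} {u v : V}

theorem Walk.IsPath.isCycle_cons_reverse {p : G.Walk u v} (hp : p.IsPath) (hl : p.length ≠ 1)
    (h : G.Adj u v) : (Walk.cons h p.reverse).IsCycle := by
  rw [Walk.cons_isCycle_iff, Walk.edges_reverse, List.mem_reverse]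
  exact ⟨hp.reverse, fun he ↦ hl (hp.length_eq_one_of_mem_edges he)⟩

theorem Walk.IsPath.exists_isCycle_of_adj {p : G.Walk u v} (hp : p.IsPath) (hl : p.length ≠ 1)
    (h : G.Adj u v) :
    ∃ c : G.Walk u u, c.IsCycle ∧ c.length = p.length + 1 ∧ ∀ w ∈ p.support, w ∈ c.support :=
  ⟨.cons h p.reverse, hp.isCycle_cons_reverse hl h, by simp,
    fun _ hw ↦ by simp [hw]⟩

end SimpleGraph

theorem stmt17_general (n r : ℕ) (A : Set (Finset (Fin n))) :
    (∀ (u v : ↥A) (p : ((layerGraph n r).induce A).Walk u v),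
        p.IsPath → p.length = 5 → (layerGraph n r).Adj ↑u ↑v →
        ∃ c : ((layerGraph n r).induce A).Walk u u,
          c.IsCycle ∧ c.length = 6 ∧ ∀ w ∈ p.support, w ∈ c.support) ∧
    ((¬ ∃ (w : ↥A) (c : ((layerGraph n r).induce A).Walk w w),
          c.IsCycle ∧ c.length = 6) →
      ¬ ∃ (u v : ↥A) (p : ((layerGraph n r).induce A).Walk u v),
          p.IsPath ∧ p.length = 5 ∧ (layerGraph n r).Adj ↑u ↑v) := by
  have extend : ∀ (u v : ↥A) (p : ((layerGraph n r).induce A).Walk u v),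
      p.IsPath → p.length = 5 → (layerGraph n r).Adj ↑u ↑v →
      ∃ c : ((layerGraph n r).induce A).Walk u u,
        c.IsCycle ∧ c.length = 6 ∧ ∀ w ∈ p.support, w ∈ c.support := by
    intro u v p hp hl hadj
    obtain ⟨c, hc, hcl, hsupp⟩ :=
      hp.exists_isCycle_of_adj (by omega) (SimpleGraph.induce_adj.mpr hadj)
    exact ⟨c, hc, by omega, hsupp⟩
  refine ⟨extend, ?_⟩
  rintro hno ⟨u, v, p, hp, hl, hadj⟩
  obtain ⟨c, hc, hcl, -⟩ := extend u v p hp hl hadj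
  exact hno ⟨u, c, hc, hcl⟩

/-- In any induced subgraph G of a layer L_r(n), every copy of C₆⁻ (a path with 5
edges whose endpoints differ in one coordinate, i.e. are adjacent in the layer)
extends to a 6-cycle of G; hence if G has no 6-cycle it has no copy of C₆⁻. -/
theorem stmt17 (n r : ℕ) (hrn : r ≤ n) (A : Set (Finset (Fin n))) :
    (∀ (u v : ↥A) (p : ((layerGraph n r).induce A).Walk u v),
        p.IsPath → p.length = 5 → (layerGraph n r).Adj ↑u ↑v →
        ∃ c : ((layerGraph n r).induce A).Walk u u,
          c.IsCycle ∧ c.length = 6 ∧ ∀ w ∈ p.support, w ∈ c.support) ∧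
    ((¬ ∃ (w : ↥A) (c : ((layerGraph n r).induce A).Walk w w),
          c.IsCycle ∧ c.length = 6) →
      ¬ ∃ (u v : ↥A) (p : ((layerGraph n r).induce A).Walk u v),
          p.IsPath ∧ p.length = 5 ∧ (layerGraph n r).Adj ↑u ↑v) :=
  stmt17_general n r A
end
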